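/- arXiv:math/9903008 — 4 statements merged into one kernel-verified Lean document; each statement's English description precedes it below -/
import Mathlib

section
/- Let A be an n×n matrix over a commutative ring, n ≥ 2. Then det(A) · det(A with first and last rows and first and last columns deleted) = det(A with first row and first column deleted) · det(A with last row and last column deleted) − det(A with first row and last column deleted) · det(A with last row and first column deleted). -/
/-!
Jacobi's complementary minor theorem for a block `m` of indices with complement `κ`: multiplying
`A` by the identity matrix whose `m`-columns are replaced by those of `adj A` gives a block
triangular matrix with diagonal blocks `det A • 1` and `A[κ, κ]`, hence
`det A * det (adj A)[m, m] = det A ^ |m| * det A[κ, κ]`. For the generic matrix over `ℤ[x_ij]`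
the factor `det A` cancels, and the cancelled identity specialises to every commutative ring.
Taking `m` to be the first and last index, the `2 × 2` determinant of `adj A` on `m` expands into
the four cofactors of the corners, which is the right-hand side of the Desnanot–Jacobi identity.
-/

namespace Matrix

variable {ι m κ R : Type*} [Fintype ι] [DecidableEq ι] [Fintype m] [DecidableEq m]
  [Fintype κ] [DecidableEq κ] [CommRing R]

theorem det_mul_det_toBlocks₁₁_adjugate (A : Matrix (m ⊕ κ) (m ⊕ κ) R) :
    A.det * A.adjugate.toBlocks₁₁.det = A.det ^ Fintype.card m * A.toBlocks₂₂.det := by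
  set X := A.adjugate.toBlocks₁₁
  set Y := A.adjugate.toBlocks₂₁
  have hblocks : A.toBlocks₁₁ * X + A.toBlocks₁₂ * Y = A.det • 1 ∧
      A.toBlocks₂₁ * X + A.toBlocks₂₂ * Y = 0 := by
    have h := mul_adjugate A
    rw [← fromBlocks_toBlocks A.adjugate, ← fromBlocks_one, fromBlocks_smul] at h
    nth_rw 1 [← fromBlocks_toBlocks A] at h
    rw [fromBlocks_multiply, fromBlocks_inj] at h
    exact ⟨h.1, by simpa using h.2.2.1⟩
  have hprod : A * fromBlocks X 0 Y 1 = fromBlocks (A.det • 1) A.toBlocks₁₂ 0 A.toBlocks₂₂ := by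
    nth_rw 1 [← fromBlocks_toBlocks A]
    rw [fromBlocks_multiply, hblocks.1, hblocks.2]
    simp
  calc A.det * X.det = (A * fromBlocks X 0 Y 1).det := by
        rw [det_mul, det_fromBlocks_zero₁₂, det_one, mul_one]
    _ = A.det ^ Fintype.card m * A.toBlocks₂₂.det := by
        rw [hprod, det_fromBlocks_zero₂₁, det_smul, det_one, mul_one]

theorem det_toBlocks₁₁_adjugate [Nonempty m] (A : Matrix (m ⊕ κ) (m ⊕ κ) R) :
    A.adjugate.toBlocks₁₁.det = A.det ^ (Fintype.card m - 1) * A.toBlocks₂₂.det := by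
  let A' := mvPolynomialX (m ⊕ κ) (m ⊕ κ) ℤ
  suffices A'.adjugate.toBlocks₁₁.det = A'.det ^ (Fintype.card m - 1) * A'.toBlocks₂₂.det by
    have h := congrArg (MvPolynomial.aeval fun p => A p.1 p.2) this
    rw [map_mul, map_pow, AlgHom.map_det, AlgHom.map_det, AlgHom.map_det] at h
    rw [← mvPolynomialX_mapMatrix_aeval ℤ A, ← AlgHom.map_adjugate]
    exact h
  apply mul_left_cancel₀ (det_mvPolynomialX_ne_zero (m ⊕ κ) ℤ)
  rw [det_mul_det_toBlocks₁₁_adjugate, ← mul_assoc, ← pow_succ',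
    Nat.sub_add_cancel Fintype.card_pos]

theorem det_submatrix_adjugate [Nonempty m] (e : m ⊕ κ ≃ ι) (A : Matrix ι ι R) :
    (A.adjugate.submatrix (e ∘ Sum.inl) (e ∘ Sum.inl)).det =
      A.det ^ (Fintype.card m - 1) * (A.submatrix (e ∘ Sum.inr) (e ∘ Sum.inr)).det := by
  have h := det_toBlocks₁₁_adjugate (A.submatrix e e)
  rwa [adjugate_submatrix_equiv_self, det_submatrix_equiv_self] at h

end Matrix

def Fin.endsSumInterior (n : ℕ) : Fin 2 ⊕ Fin n → Fin (n + 2) :=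
  Sum.elim ![0, Fin.last (n + 1)] fun k => k.succ.castSucc

theorem Fin.endsSumInterior_injective (n : ℕ) : Function.Injective (Fin.endsSumInterior n) := by
  refine Function.Injective.sumElim ?_ ((Fin.castSucc_injective _).comp (Fin.succ_injective _)) ?_
  · intro a b h
    fin_cases a <;> fin_cases b <;> simp_all [Fin.ext_iff]
  · intro a k
    fin_cases a
    · simp [Fin.ext_iff]
    · simpa [Fin.ext_iff] using k.isLt.ne'

noncomputable def Fin.endsSumInteriorEquiv (n : ℕ) : Fin 2 ⊕ Fin n ≃ Fin (n + 2) :=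
  Equiv.ofBijective _ ((Fintype.bijective_iff_injective_and_card _).2
    ⟨Fin.endsSumInterior_injective n, by simp [add_comm]⟩)

theorem Matrix.det_submatrix_adjugate_ends {R : Type*} [CommRing R] (n : ℕ)
    (A : Matrix (Fin (n + 2)) (Fin (n + 2)) R) :
    (A.adjugate.submatrix (Fin.endsSumInteriorEquiv n ∘ Sum.inl)
        (Fin.endsSumInteriorEquiv n ∘ Sum.inl)).det =
      (A.submatrix Fin.succ Fin.succ).det * (A.submatrix Fin.castSucc Fin.castSucc).det -
        (A.submatrix Fin.succ Fin.castSucc).det * (A.submatrix Fin.castSucc Fin.succ).det := by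
  have hsign : ((-1 : R) ^ (n + 1)) ^ 2 = 1 := by
    rw [← pow_mul, pow_mul', neg_one_sq, one_pow]
  rw [det_fin_two]
  simp [Fin.endsSumInteriorEquiv, Fin.endsSumInterior, adjugate_fin_succ_eq_det_submatrix]
  linear_combination
    (A.submatrix Fin.castSucc Fin.succ).det * (A.submatrix Fin.succ Fin.castSucc).det * hsign

/-- Desnanot–Jacobi (Dodgson condensation) identity. -/
theorem stmt0 {R : Type*} [CommRing R] (n : ℕ) (A : Matrix (Fin (n + 2)) (Fin (n + 2)) R) :
    A.det *
      (A.submatrix (fun i : Fin n => i.succ.castSucc) (fun j : Fin n => j.succ.castSucc)).det =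
    (A.submatrix (Fin.succ : Fin (n + 1) → Fin (n + 2)) (Fin.succ : Fin (n + 1) → Fin (n + 2))).det *
      (A.submatrix (Fin.castSucc : Fin (n + 1) → Fin (n + 2)) (Fin.castSucc : Fin (n + 1) → Fin (n + 2))).det -
    (A.submatrix (Fin.succ : Fin (n + 1) → Fin (n + 2)) (Fin.castSucc : Fin (n + 1) → Fin (n + 2))).det *
      (A.submatrix (Fin.castSucc : Fin (n + 1) → Fin (n + 2)) (Fin.succ : Fin (n + 1) → Fin (n + 2))).det := by
  rw [← Matrix.det_submatrix_adjugate_ends, Matrix.det_submatrix_adjugate, Fintype.card_fin,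
    Nat.add_one_sub_one, pow_one]
  rfl
end

section
/- For ℓ, m ≥ 1 define Q_m(ℓ) = det(h_{m + j − i})_{1 ≤ i,j ≤ ℓ}, where h_k denotes the complete homogeneous symmetric polynomial of degree k in a fixed finite set of variables (with h_0 = 1 and h_k = 0 for k < 0). Then Q_m(ℓ)² = Q_{m−1}(ℓ) Q_{m+1}(ℓ) + Q_m(ℓ−1) Q_m(ℓ+1), where Q_0(ℓ) = 1 and Q_m(0) = 1. -/
/-- The complete homogeneous symmetric polynomial of degree `k ∈ ℤ` in `N` variables,
with `h_k = 0` for `k < 0` (and `h_0 = 1`). -/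
noncomputable def hInt (N : ℕ) (k : ℤ) : MvPolynomial (Fin N) ℤ :=
  if 0 ≤ k then MvPolynomial.hsymm (Fin N) ℤ k.toNat else 0

/-- `Q_m(ℓ) = det (h_{m+j-i})_{1 ≤ i,j ≤ ℓ}`, the Jacobi–Trudi determinant of the
`ℓ × m` rectangle. -/
noncomputable def QJT (N m ℓ : ℕ) : MvPolynomial (Fin N) ℤ :=
  Matrix.det (fun i j : Fin ℓ => hInt N ((m : ℤ) + (j : ℤ) - (i : ℤ)))

/-!
For a square matrix `A`, write `A[i, j]` for the minor without row `i` and column `j`, and `A°` for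
the minor without the first and last rows and columns. The Desnanot–Jacobi identity
`det A · A° = A[1, 1] · A[L, L] − A[1, L] · A[L, 1]` is Jacobi's complementary minor theorem for a
`2 × 2` block of the adjugate. For the Jacobi–Trudi matrix of the `(ℓ + 1) × m` rectangle all five
minors are Jacobi–Trudi determinants of rectangles: deleting the first row and the last column
lowers `m` by one, deleting the last row and the first column raises it by one.

Jacobi's theorem comes from `X · A = [[det A · 1, 0], [A₂₁, A₂₂]]`, where `X` is the identity with
its first block row replaced by that of `adj A`. This proves it multiplied by `det A`; the factor
is cancelled for the generic matrix, whose determinant is a nonzero polynomial.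
-/

open Matrix

namespace Matrix

section Jacobi

variable {R : Type*} [CommRing R] {m n : Type*} [Fintype m] [Fintype n] [DecidableEq m]
  [DecidableEq n]

theorem det_mul_det_adjugate_toBlocks₁₁ (A : Matrix (m ⊕ n) (m ⊕ n) R) :
    A.det * (adjugate A).toBlocks₁₁.det = A.det ^ Fintype.card m * A.toBlocks₂₂.det := by
  set C := adjugate A
  have hCA : fromBlocks C.toBlocks₁₁ C.toBlocks₁₂ C.toBlocks₂₁ C.toBlocks₂₂ *
      fromBlocks A.toBlocks₁₁ A.toBlocks₁₂ A.toBlocks₂₁ A.toBlocks₂₂ =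
      fromBlocks (A.det • 1) 0 0 (A.det • 1) := by
    rw [fromBlocks_toBlocks, fromBlocks_toBlocks, adjugate_mul, ← fromBlocks_one, fromBlocks_smul,
      smul_zero, smul_zero]
  rw [fromBlocks_multiply] at hCA
  obtain ⟨h₁₁, h₁₂, -, -⟩ := fromBlocks_inj.mp hCA
  have hXA : fromBlocks C.toBlocks₁₁ C.toBlocks₁₂ 0 1 * A =
      fromBlocks (A.det • 1) 0 A.toBlocks₂₁ A.toBlocks₂₂ := by
    conv_lhs => rw [← fromBlocks_toBlocks A]
    rw [fromBlocks_multiply, h₁₁, h₁₂]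
    simp
  have hdet := congrArg det hXA
  rw [det_mul, det_fromBlocks_zero₂₁, det_fromBlocks_zero₁₂, det_smul, det_one, det_one] at hdet
  linear_combination hdet

theorem det_adjugate_toBlocks₁₁ [Nonempty m] (A : Matrix (m ⊕ n) (m ⊕ n) R) :
    (adjugate A).toBlocks₁₁.det = A.det ^ (Fintype.card m - 1) * A.toBlocks₂₂.det := by
  set G := mvPolynomialX (m ⊕ n) (m ⊕ n) ℤ
  have hG : (adjugate G).toBlocks₁₁.det = G.det ^ (Fintype.card m - 1) * G.toBlocks₂₂.det := by
    apply mul_left_cancel₀ (det_mvPolynomialX_ne_zero _ ℤ)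
    rw [det_mul_det_adjugate_toBlocks₁₁, ← mul_assoc, ← pow_succ',
      Nat.sub_add_cancel Fintype.card_pos]
  set f := MvPolynomial.aeval (R := ℤ) fun p : (m ⊕ n) × (m ⊕ n) => A p.1 p.2
  rw [← mvPolynomialX_mapMatrix_aeval ℤ A, ← AlgHom.map_adjugate]
  have hA := congrArg f hG
  simp only [map_mul, map_pow, AlgHom.map_det] at hA
  exact hA

end Jacobi

theorem desnanot_jacobi {R : Type*} [CommRing R] {n : ℕ}
    (A : Matrix (Fin (n + 2)) (Fin (n + 2)) R) :
    A.det * (A.submatrix (fun k : Fin n => k.succ.castSucc) fun k => k.succ.castSucc).det =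
      (A.submatrix Fin.succ Fin.succ).det * (A.submatrix Fin.castSucc Fin.castSucc).det -
        (A.submatrix Fin.castSucc Fin.succ).det * (A.submatrix Fin.succ Fin.castSucc).det := by
  let e : Fin 2 ⊕ Fin n ≃ Fin (n + 2) :=
    finSumFinEquiv.trans ((finCongr (Nat.add_comm 2 n)).trans (finRotate (n + 2)).symm)
  have he₀ : e (.inl 0) = Fin.last (n + 1) := by simp [e, Fin.ext_iff, Fin.coe_sub_one]
  have he₁ : e (.inl 1) = 0 := by simp [e, Fin.ext_iff, Fin.coe_sub_one]
  have heᵣ (k : Fin n) : e (.inr k) = k.succ.castSucc := by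
    simp [e, Fin.ext_iff, Fin.coe_sub_one]
  have hinner : (A.submatrix e e).toBlocks₂₂ =
      A.submatrix (fun k : Fin n => k.succ.castSucc) fun k => k.succ.castSucc := by
    ext i j
    simp [toBlocks₂₂, heᵣ]
  have h := det_adjugate_toBlocks₁₁ (A.submatrix e e)
  rw [adjugate_submatrix_equiv_self, det_submatrix_equiv_self, Fintype.card_fin, pow_one,
    det_fin_two, hinner] at h
  simp only [toBlocks₁₁, of_apply, submatrix_apply, he₀, he₁, adjugate_fin_succ_eq_det_submatrix,
    Fin.succAbove_last, Fin.succAbove_zero, Fin.val_last, Fin.val_zero, add_zero, zero_add,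
    pow_zero, one_mul] at h
  have hsign : (-1 : R) ^ (n + 1 + (n + 1)) = 1 := Even.neg_one_pow ⟨n + 1, rfl⟩
  rw [hsign, one_mul] at h
  linear_combination -h - (A.submatrix Fin.succ Fin.castSucc).det *
    (A.submatrix Fin.castSucc Fin.succ).det * hsign

end Matrix

theorem hInt_zero (N : ℕ) : hInt N 0 = 1 := by
  simp [hInt, MvPolynomial.hsymm_zero]

theorem hInt_of_neg (N : ℕ) {k : ℤ} (hk : k < 0) : hInt N k = 0 :=
  if_neg hk.not_ge

noncomputable def jacobiTrudiMatrix (N m ℓ : ℕ) : Matrix (Fin ℓ) (Fin ℓ) (MvPolynomial (Fin N) ℤ) :=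
  of fun i j => hInt N ((m : ℤ) + (j : ℤ) - (i : ℤ))

theorem QJT_eq_det (N m ℓ : ℕ) : QJT N m ℓ = (jacobiTrudiMatrix N m ℓ).det := rfl

theorem jacobiTrudiMatrix_submatrix {N m m' k ℓ : ℕ} (f g : Fin ℓ → Fin k)
    (hfg : ∀ i j, (m : ℤ) + g j - f i = m' + j - i) :
    (jacobiTrudiMatrix N m k).submatrix f g = jacobiTrudiMatrix N m' ℓ := by
  ext i j
  simp [jacobiTrudiMatrix, hfg]

theorem QJT_zero_left (N ℓ : ℕ) : QJT N 0 ℓ = 1 := by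
  rw [QJT_eq_det, det_of_isUpperTriangular]
  · simp [jacobiTrudiMatrix, hInt_zero]
  · intro i j hji
    exact hInt_of_neg N (by simpa using hji)

theorem QJT_zero_right (N m : ℕ) : QJT N m 0 = 1 := det_isEmpty

theorem stmt1 (N m ℓ : ℕ) (hm : 1 ≤ m) (hℓ : 1 ≤ ℓ) :
    (∀ ℓ', QJT N 0 ℓ' = 1) ∧ (∀ m', QJT N m' 0 = 1) ∧
    QJT N m ℓ ^ 2 =
      QJT N (m - 1) ℓ * QJT N (m + 1) ℓ + QJT N m (ℓ - 1) * QJT N m (ℓ + 1) := by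
  refine ⟨QJT_zero_left N, QJT_zero_right N, ?_⟩
  obtain ⟨n, rfl⟩ : ∃ n, ℓ = n + 1 := ⟨ℓ - 1, by omega⟩
  obtain ⟨k, rfl⟩ : ∃ k, m = k + 1 := ⟨m - 1, by omega⟩
  have h := desnanot_jacobi (jacobiTrudiMatrix N (k + 1) (n + 1 + 1))
  rw [jacobiTrudiMatrix_submatrix (m' := k + 1) (fun i : Fin n => i.succ.castSucc)
      (fun j => j.succ.castSucc) fun i j => by simp; ring,
    jacobiTrudiMatrix_submatrix (m' := k + 1) Fin.succ Fin.succ fun i j => by simp; ring,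
    jacobiTrudiMatrix_submatrix (m' := k + 1) Fin.castSucc Fin.castSucc fun i j => by simp,
    jacobiTrudiMatrix_submatrix (m' := k + 2) Fin.castSucc Fin.succ fun i j => by simp; ring,
    jacobiTrudiMatrix_submatrix (m' := k) Fin.succ Fin.castSucc fun i j => by simp; ring] at h
  simp only [← QJT_eq_det, Nat.add_sub_cancel] at h ⊢
  linear_combination -h
end

section
/- In the root system of type B_n with fundamental weights ω_1, …, ω_n (ω_0 = 0), for 1 ≤ a ≤ n−1 the set of dominant integral weights λ with λ ≺ ω_a (strictly smaller in dominance order) is exactly {ω_0, ω_1, …, ω_{a−1}}. -/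
/-- Simple roots of `B_n` realized in `ℚ^ℕ` (coordinates beyond `n` unused):
`α_i = e_i − e_{i+1}` for `i < n−1` (0-indexed) and `α_{n−1} = e_{n−1}`. -/
def alphaB (n i : ℕ) : ℕ → ℚ := fun j =>
  (if j = i then 1 else 0) - (if j = i + 1 ∧ j < n then 1 else 0)

/-- Fundamental weights of `B_n`: `ω_k = e_1 + ⋯ + e_k` for `k < n`,
`ω_n = (e_1 + ⋯ + e_n)/2`, and `ω_0 = 0`. -/
def omegaB (n k : ℕ) : ℕ → ℚ := fun j =>
  if j < n then (if k = n then 1/2 else if j < k then 1 else 0) else 0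

/-- `v` is a dominant integral weight of `B_n`: its pairing with every simple
coroot is a nonnegative integer. -/
def isDomIntB (n : ℕ) (v : ℕ → ℚ) : Prop :=
  ∀ i < n, ∃ m : ℕ, (if i = n - 1 then 2 * v i else v i - v (i + 1)) = (m : ℚ)

lemma omegaB_apply (n k j : ℕ) (hk : k < n) :
    omegaB n k j = if j < k then (1:ℚ) else 0 := by
  simp only [omegaB]
  by_cases hj : j < n
  · simp [hj, hk.ne]
  · rw [if_neg hj, if_neg (by omega : ¬ j < k)]

lemma minstep (k a : ℕ) :
    ((min (k+1) a : ℕ) : ℚ) - ((min k a : ℕ) : ℚ) = if k < a then 1 else 0 := by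
  rcases lt_or_ge k a with h | h
  · rw [min_eq_left (by omega), min_eq_left (by omega)]
    push_cast
    simp [h]
  · rw [min_eq_right (by omega), min_eq_right h]
    simp [not_lt.mpr h]

lemma sumEval (n : ℕ) (c : ℕ → ℕ) (j : ℕ) :
    (∑ i ∈ Finset.range n, (c i : ℚ) • alphaB n i) j
      = (if j < n then (c j : ℚ) else 0) - (if 1 ≤ j ∧ j < n then (c (j-1) : ℚ) else 0) := by
  rw [Finset.sum_apply]
  simp only [Pi.smul_apply, smul_eq_mul, alphaB, mul_sub, mul_ite, mul_one, mul_zero]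
  rw [Finset.sum_sub_distrib]
  congr 1
  · have hterm : ∀ i, (if j = i then (c i:ℚ) else 0) = if j = i then (c i:ℚ) else 0 := fun _ => rfl
    rw [Finset.sum_ite_eq (Finset.range n) j (fun i => (c i:ℚ))]
    simp [Finset.mem_range]
  · rcases j with _ | k
    · simp
    · by_cases hkn : k + 1 < n
      · have hterm : ∀ i, (if k+1 = i+1 ∧ k+1 < n then (c i:ℚ) else 0)
            = if k = i then (c i:ℚ) else 0 := by
          intro i
          have h : (k+1 = i+1 ∧ k+1 < n) ↔ k = i := by omega
          rw [if_congr h rfl rfl]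
        rw [Finset.sum_congr rfl (fun i _ => hterm i), Finset.sum_ite_eq]
        simp [Finset.mem_range, hkn, (by omega : k < n)]
      · have hterm : ∀ i, (if k+1 = i+1 ∧ k+1 < n then (c i:ℚ) else 0) = 0 := fun i => by
          rw [if_neg (fun h => hkn h.2)]
        rw [Finset.sum_congr rfl (fun i _ => hterm i)]
        simp [hkn]

/-- For `1 ≤ a ≤ n−1`, the dominant integral weights strictly below `ω_a` in the
dominance order of `B_n` are exactly `ω_0, ω_1, …, ω_{a−1}`. -/
theorem stmt7 (n a : ℕ) (ha1 : 1 ≤ a) (ha2 : a ≤ n - 1) (lam : ℕ → ℚ)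
    (hsupp : ∀ j, n ≤ j → lam j = 0) :
    (isDomIntB n lam ∧ lam ≠ omegaB n a ∧
        ∃ c : ℕ → ℕ, (fun j => omegaB n a j - lam j) =
          ∑ i ∈ Finset.range n, (c i : ℚ) • alphaB n i) ↔
      ∃ b < a, lam = omegaB n b := by
  have hn : 2 ≤ n := by omega
  have han : a < n := by omega
  constructor
  · rintro ⟨hdom, hne, c, hc⟩
    have hpt : ∀ j, omegaB n a j - lam j
        = (if j < n then (c j : ℚ) else 0) - (if 1 ≤ j ∧ j < n then (c (j-1) : ℚ) else 0) := by
      intro j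
      rw [← sumEval n c j]
      exact congrFun hc j
    -- lambda is antitone
    have hstep : ∀ i, lam (i+1) ≤ lam i := by
      intro i
      rcases lt_or_ge i n with hi | hi
      · rcases hdom i hi with ⟨m, hm⟩
        by_cases hie : i = n - 1
        · rw [if_pos hie] at hm
          have h1 : lam (i+1) = 0 := hsupp (i+1) (by omega)
          have h2 : (0:ℚ) ≤ m := Nat.cast_nonneg m
          rw [h1]; linarith
        · rw [if_neg hie] at hm
          have h2 : (0:ℚ) ≤ m := Nat.cast_nonneg m
          linarith
      · rw [hsupp i hi, hsupp (i+1) (by omega)]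
    have hanti : ∀ i j, i ≤ j → lam j ≤ lam i := by
      intro i j hij
      induction j with
      | zero => have : i = 0 := by omega
                rw [this]
      | succ k ih =>
          rcases Nat.lt_or_ge i (k+1) with h | h
          · exact le_trans (hstep k) (ih (by omega))
          · have : i = k + 1 := by omega
            rw [this]
    have hnn : ∀ j, 0 ≤ lam j := by
      intro j
      rcases le_or_gt j n with h | h
      · have := hanti j n h
        rw [hsupp n le_rfl] at this
        linarith
      · rw [hsupp j (by omega)]
    have h00 := hpt 0
    rw [omegaB_apply n a 0 han, if_pos (show 0 < a from ha1),
      if_pos (show 0 < n by omega), if_neg (show ¬ (1 ≤ 0 ∧ 0 < n) by omega)] at h00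
    have hlam0 : lam 0 ≤ 1 := by
      have : (0:ℚ) ≤ c 0 := Nat.cast_nonneg _
      linarith
    have hle1 : ∀ j, lam j ≤ 1 := fun j => le_trans (hanti 0 j (Nat.zero_le j)) hlam0
    -- each coordinate is 0 or 1
    have hlamf : ∀ j, j < n → lam j
        = (if j < a then (1:ℚ) else 0) - (c j : ℚ) + (if 1 ≤ j then (c (j-1) : ℚ) else 0) := by
      intro j hj
      have h1 := hpt j
      rw [omegaB_apply n a j han] at h1
      simp only [hj, if_true, and_true] at h1
      linarith
    have hint : ∀ j, lam j = 0 ∨ lam j = 1 := by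
      intro j
      rcases lt_or_ge j n with hj | hj
      · obtain ⟨z, hz⟩ : ∃ z : ℤ, lam j = (z : ℚ) := by
          refine ⟨(if j < a then 1 else 0) - (c j : ℤ) + (if 1 ≤ j then (c (j-1) : ℤ) else 0), ?_⟩
          rw [hlamf j hj]
          split_ifs <;> push_cast <;> ring1
        have hz0 : (0:ℚ) ≤ z := hz ▸ hnn j
        have hz1 : (z:ℚ) ≤ 1 := hz ▸ hle1 j
        have hz0' : (0:ℤ) ≤ z := by exact_mod_cast hz0
        have hz1' : z ≤ 1 := by exact_mod_cast hz1
        have : z = 0 ∨ z = 1 := by omega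
        rcases this with h | h <;> [left; right] <;> rw [hz, h] <;> norm_num
      · left; exact hsupp j hj
    -- define b
    have hex : ∃ j, lam j = 0 := ⟨n, hsupp n le_rfl⟩
    set b := Nat.find hex with hbdef
    have hb0 : lam b = 0 := Nat.find_spec hex
    have hbn : b ≤ n := Nat.find_min' hex (hsupp n le_rfl)
    have hltb : ∀ j, j < b → lam j = 1 :=
      fun j hj => (hint j).resolve_left (Nat.find_min hex hj)
    have hgeb : ∀ j, b ≤ j → lam j = 0 := by
      intro j hj
      have := hanti b j hj
      rw [hb0] at this
      linarith [hnn j]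
    have hind : ∀ j, lam j = if j < b then 1 else 0 := by
      intro j
      rcases lt_or_ge j b with h | h
      · rw [hltb j h, if_pos h]
      · rw [hgeb j h, if_neg (by omega)]
    -- partial sums
    have hpsum : ∀ k, k < n → (∑ j ∈ Finset.range (k+1), (omegaB n a j - lam j)) = (c k : ℚ) := by
      intro k
      induction k with
      | zero =>
          intro hk
          rw [Finset.sum_range_one, hpt 0]
          simp [hk]
      | succ k ih =>
          intro hk
          rw [Finset.sum_range_succ, ih (by omega), hpt (k+1)]
          simp only [hk, if_true, (by omega : 1 ≤ k + 1), true_and, Nat.add_sub_cancel]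
          ring
    -- total sum
    have key : ∀ k, (∑ j ∈ Finset.range k,
        ((if j < a then (1:ℚ) else 0) - (if j < b then (1:ℚ) else 0)))
        = ((min k a : ℕ) : ℚ) - ((min k b : ℕ) : ℚ) := by
      intro k
      induction k with
      | zero => simp
      | succ k ih =>
          rw [Finset.sum_range_succ, ih]
          have h1 := minstep k a
          have h2 := minstep k b
          linarith
    have hsum : (∑ j ∈ Finset.range n, (omegaB n a j - lam j)) = (a : ℚ) - (b : ℚ) := by
      have := key n
      rw [min_eq_right (by omega : a ≤ n), min_eq_right hbn] at this
      rw [← this]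
      refine Finset.sum_congr rfl (fun j _ => ?_)
      rw [omegaB_apply n a j han, hind j]
    have hcn := hpsum (n-1) (by omega)
    rw [(by omega : n - 1 + 1 = n), hsum] at hcn
    have hba : b ≤ a := by
      have : (0:ℚ) ≤ c (n-1) := Nat.cast_nonneg _
      have : (b:ℚ) ≤ (a:ℚ) := by linarith
      exact_mod_cast this
    have hbne : b ≠ a := by
      intro h
      apply hne
      funext j
      rw [hind j, omegaB_apply n a j han, h]
    exact ⟨b, by omega, funext fun j => by
      rw [hind j, omegaB_apply n b j (by omega)]⟩
  · rintro ⟨b, hb, rfl⟩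
    have hbn : b < n := by omega
    refine ⟨?_, ?_, ?_⟩
    · intro i hi
      refine ⟨if i = n-1 then 0 else if i < b ∧ ¬ (i+1 < b) then 1 else 0, ?_⟩
      rw [omegaB_apply n b i hbn, omegaB_apply n b (i+1) hbn]
      split_ifs <;> push_cast <;> first | (exfalso; omega) | ring1
    · intro h
      have hx := congrFun h b
      rw [omegaB_apply n b b hbn, omegaB_apply n a b han] at hx
      simp [hb] at hx
    · refine ⟨fun j => min (j+1) a - min (j+1) b, ?_⟩
      funext j
      rw [sumEval, omegaB_apply n a j han, omegaB_apply n b j hbn]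
      have hcast : ∀ m : ℕ, ((min m a - min m b : ℕ) : ℚ)
          = ((min m a : ℕ) : ℚ) - ((min m b : ℕ) : ℚ) := by
        intro m
        have h : min m b ≤ min m a := by omega
        push_cast [h]
        ring
      by_cases hj : j < n
      · by_cases hj1 : 1 ≤ j
        · rw [if_pos hj, if_pos (show 1 ≤ j ∧ j < n from ⟨hj1, hj⟩)]
          have hj' : j - 1 + 1 = j := by omega
          rw [hj', hcast, hcast]
          have h1 := minstep j a
          have h2 := minstep j b
          linarith
        · have hj0 : j = 0 := by omega
          subst hj0
          rw [if_pos hj, if_neg (show ¬ (1 ≤ 0 ∧ 0 < n) by omega), hcast]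
          have h1 := minstep 0 a
          have h2 := minstep 0 b
          have e1 : ((min 0 a : ℕ) : ℚ) = 0 := by simp
          have e2 : ((min 0 b : ℕ) : ℚ) = 0 := by simp
          linarith
      · rw [if_neg hj, if_neg (by omega : ¬ (1 ≤ j ∧ j < n)),
          if_neg (by omega : ¬ j < a), if_neg (by omega : ¬ j < b)]
end

section
/- Let Λ be the ring of symmetric functions (or symmetric polynomials in N ≥ ℓ+1 variables), and define Q_m(ℓ) = s_{R(ℓ,m)}, the Schur function of the ℓ×m rectangle. Then for all m ≥ 2 and ℓ ≥ 1, Q_{m−2}(ℓ) divides Q_{m−1}(ℓ)² − Q_{m−1}(ℓ−1) Q_{m−1}(ℓ+1) in Λ, with quotient Q_m(ℓ). -/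
namespace Matrix

variable {R : Type*} [CommRing R]

theorem submatrix_updateCol_single {ι κ : Type*} [DecidableEq ι] [DecidableEq κ]
    {f g : κ → ι} (hf : f.Injective) (hg : g.Injective) (A : Matrix ι ι R) (i j : κ) (c : R) :
    (A.updateCol (g j) (Pi.single (f i) c)).submatrix f g =
      (A.submatrix f g).updateCol j (Pi.single i c) := by
  ext a b
  simp [updateCol_apply, hg.eq_iff, Pi.single_apply, hf.eq_iff]

section

variable {ι : Type*} [Fintype ι] [DecidableEq ι]

theorem det_one_updateCol_updateCol {i j : ι} (hij : i ≠ j) (v w : ι → R) :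
    (((1 : Matrix ι ι R).updateCol i v).updateCol j w).det = v i * w j - v j * w i := by
  let U : Matrix ι (Fin 2) R :=
    of fun a => ![v a - (Pi.single i 1 : ι → R) a, w a - (Pi.single j 1 : ι → R) a]
  let V : Matrix (Fin 2) ι R := of ![Pi.single i (1 : R), Pi.single j 1]
  have hUV : ((1 : Matrix ι ι R).updateCol i v).updateCol j w = 1 + U * V := by
    ext a b
    simp only [updateCol_apply, add_apply, mul_apply, Fin.sum_univ_two, U, V, of_apply,
      cons_val_zero, cons_val_one, Pi.single_apply, one_apply]
    split_ifs <;> simp_all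
  rw [hUV, det_one_add_mul_comm, det_fin_two]
  simp [U, V, Pi.single_apply, hij, hij.symm]
  ring

theorem mulVec_transpose_adjugate (M : Matrix ι ι R) (j : ι) :
    M *ᵥ (adjugate M)ᵀ j = Pi.single j M.det := by
  funext a
  simpa [mulVec, dotProduct, mul_apply, one_apply, Pi.single_apply, eq_comm] using
    congr_fun (congr_fun (mul_adjugate M) a) j

theorem det_mul_adjugate_sub_adjugate {i j : ι} (hij : i ≠ j) (M : Matrix ι ι R) :
    M.det * (adjugate M i i * adjugate M j j - adjugate M j i * adjugate M i j) =
      ((M.updateCol i (Pi.single i M.det)).updateCol j (Pi.single j M.det)).det := by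
  rw [← transpose_apply (adjugate M) i i, ← transpose_apply (adjugate M) j j,
    ← transpose_apply (adjugate M) i j, ← transpose_apply (adjugate M) j i,
    ← det_one_updateCol_updateCol hij, ← det_mul, mul_updateCol, mul_updateCol, mul_one,
    mulVec_transpose_adjugate, mulVec_transpose_adjugate]

end

theorem det_updateCol_single {n : ℕ} (A : Matrix (Fin (n + 1)) (Fin (n + 1)) R)
    (i j : Fin (n + 1)) (c : R) :
    (A.updateCol j (Pi.single i c)).det =
      (-1) ^ (i + j : ℕ) * c * (A.submatrix i.succAbove j.succAbove).det := by
  rw [det_succ_column _ j, Fintype.sum_eq_single i fun k hk => by simp [hk]]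
  simp [submatrix_updateCol_succAbove]

theorem det_updateCol_single_zero_last {n : ℕ} (M : Matrix (Fin (n + 2)) (Fin (n + 2)) R)
    (c d : R) :
    ((M.updateCol 0 (Pi.single 0 c)).updateCol (Fin.last _) (Pi.single (Fin.last _) d)).det =
      c * d * (M.submatrix (Fin.succ ∘ Fin.castSucc) (Fin.succ ∘ Fin.castSucc)).det := by
  rw [updateCol_comm _ (Fin.last_pos.ne : (0 : Fin (n + 2)) ≠ Fin.last _), det_updateCol_single,
    Fin.succAbove_zero, ← Fin.succ_last,
    submatrix_updateCol_single (Fin.succ_injective _) (Fin.succ_injective _), det_updateCol_single]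
  simp [submatrix_submatrix]
  ring

theorem det_mul_desnanot_jacobi {n : ℕ} (M : Matrix (Fin (n + 2)) (Fin (n + 2)) R) :
    M.det * ((M.submatrix Fin.succ Fin.succ).det * (M.submatrix Fin.castSucc Fin.castSucc).det -
        (M.submatrix Fin.succ Fin.castSucc).det * (M.submatrix Fin.castSucc Fin.succ).det) =
      M.det * (M.det * (M.submatrix (Fin.succ ∘ Fin.castSucc) (Fin.succ ∘ Fin.castSucc)).det) := by
  have h := det_mul_adjugate_sub_adjugate (Fin.last_pos.ne : (0 : Fin (n + 2)) ≠ Fin.last _) M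
  have hsign : ∀ k : ℕ, (-1 : R) ^ (k + k) = 1 := fun k => by rw [← two_mul, pow_mul]; simp
  rw [det_updateCol_single_zero_last] at h
  simp only [adjugate_fin_succ_eq_det_submatrix, Fin.succAbove_zero, Fin.succAbove_last,
    Fin.val_zero, zero_add, add_zero, pow_zero, hsign, one_mul] at h
  rw [mul_mul_mul_comm, ← pow_add, hsign, one_mul] at h
  rw [h, mul_assoc]

theorem desnanot_jacobi_s12 {n : ℕ} (M : Matrix (Fin (n + 2)) (Fin (n + 2)) R) :
    M.det * (M.submatrix (Fin.succ ∘ Fin.castSucc) (Fin.succ ∘ Fin.castSucc)).det =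
      (M.submatrix Fin.succ Fin.succ).det * (M.submatrix Fin.castSucc Fin.castSucc).det -
        (M.submatrix Fin.succ Fin.castSucc).det * (M.submatrix Fin.castSucc Fin.succ).det := by
  have hX := mul_left_cancel₀ (det_mvPolynomialX_ne_zero (Fin (n + 2)) ℤ)
    (det_mul_desnanot_jacobi (mvPolynomialX (Fin (n + 2)) (Fin (n + 2)) ℤ))
  have := congr_arg (MvPolynomial.eval₂Hom (Int.castRingHom R) fun p => M p.1 p.2) hX
  simp only [map_sub, map_mul, RingHom.map_det, RingHom.mapMatrix_apply, ← submatrix_map,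
    MvPolynomial.coe_eval₂Hom, mvPolynomialX_map_eval₂] at this
  exact this.symm

end Matrix

open Matrix

section Toeplitz

variable {R : Type*} [CommRing R]

noncomputable def toeplitzDet (h : ℤ → R) (m : ℤ) (ℓ : ℕ) : R :=
  (of fun i j : Fin ℓ => h (m + j - i)).det

theorem det_submatrix_toeplitz (h : ℤ → R) (m d : ℤ) {ℓ ℓ' : ℕ} (f g : Fin ℓ' → Fin ℓ)
    (hfg : ∀ i j, (g j : ℤ) - f i = d + j - i) :
    ((of fun i j : Fin ℓ => h (m + j - i)).submatrix f g).det = toeplitzDet h (m + d) ℓ' := by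
  refine congr_arg det (ext fun i j => ?_)
  simp only [submatrix_apply, of_apply]
  congr 1
  linear_combination hfg i j

theorem toeplitzDet_desnanot_jacobi (h : ℤ → R) (m : ℤ) (ℓ : ℕ) :
    toeplitzDet h (m - 1) (ℓ + 1) * toeplitzDet h (m + 1) (ℓ + 1) =
      toeplitzDet h m (ℓ + 1) ^ 2 - toeplitzDet h m ℓ * toeplitzDet h m (ℓ + 2) := by
  have hDJ := desnanot_jacobi_s12 (of fun i j : Fin (ℓ + 2) => h (m + j - i))
  rw [det_submatrix_toeplitz h m 0 _ _ fun i j => by simp,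
    det_submatrix_toeplitz h m 0 _ _ fun i j => by simp,
    det_submatrix_toeplitz h m 0 _ _ fun i j => by simp,
    det_submatrix_toeplitz h m (-1) _ _ fun i j => by simp; ring,
    det_submatrix_toeplitz h m 1 _ _ fun i j => by simp; ring] at hDJ
  simp only [add_zero, ← sub_eq_add_neg] at hDJ
  change toeplitzDet h m (ℓ + 2) * _ = _ at hDJ
  linear_combination hDJ

end Toeplitz

theorem QJT_eq_toeplitzDet (N m ℓ : ℕ) : QJT N m ℓ = toeplitzDet (hInt N) m ℓ := rfl

theorem stmt12_general (N m ℓ : ℕ) (hm : 2 ≤ m) (hℓ : 1 ≤ ℓ) :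
    QJT N (m - 2) ℓ ∣
      (QJT N (m - 1) ℓ ^ 2 - QJT N (m - 1) (ℓ - 1) * QJT N (m - 1) (ℓ + 1)) ∧
    QJT N (m - 2) ℓ * QJT N m ℓ =
      QJT N (m - 1) ℓ ^ 2 - QJT N (m - 1) (ℓ - 1) * QJT N (m - 1) (ℓ + 1) := by
  obtain ⟨k, rfl⟩ := Nat.exists_eq_add_of_le' hm
  obtain ⟨p, rfl⟩ := Nat.exists_eq_add_of_le' hℓ
  have key : QJT N k (p + 1) * QJT N (k + 2) (p + 1) =
      QJT N (k + 1) (p + 1) ^ 2 - QJT N (k + 1) p * QJT N (k + 1) (p + 2) := by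
    simpa [QJT_eq_toeplitzDet, add_assoc] using toeplitzDet_desnanot_jacobi (hInt N) (k + 1) p
  simp only [Nat.add_sub_cancel]
  exact ⟨Dvd.intro _ key, key⟩

/-- In the ring of symmetric polynomials (in `N ≥ ℓ+1` variables), `Q_{m−2}(ℓ)`
divides `Q_{m−1}(ℓ)² − Q_{m−1}(ℓ−1) Q_{m−1}(ℓ+1)`, with quotient `Q_m(ℓ)`. -/
theorem stmt12 (N m ℓ : ℕ) (hN : ℓ + 1 ≤ N) (hm : 2 ≤ m) (hℓ : 1 ≤ ℓ) :
    QJT N (m - 2) ℓ ∣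
      (QJT N (m - 1) ℓ ^ 2 - QJT N (m - 1) (ℓ - 1) * QJT N (m - 1) (ℓ + 1)) ∧
    QJT N (m - 2) ℓ * QJT N m ℓ =
      QJT N (m - 1) ℓ ^ 2 - QJT N (m - 1) (ℓ - 1) * QJT N (m - 1) (ℓ + 1) :=
  stmt12_general N m ℓ hm hℓ
end
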